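/- Let p : Fin n → ℝ² be injective with no three of the points collinear, and let δ be a symmetric assignment of a real number δ_{ij} to every unordered pair of distinct indices. Then the following are equivalent: (a) there exists v : Fin n → ℝ² with δ_{ij} = ⟪pᵢ − pⱼ, vᵢ − vⱼ⟫ for all pairs i, j; (b) for every four pairwise distinct indices a, b, c, d one has ∑ w_{xy}·δ_{xy} = 0, where the sum runs over the six unordered pairs {x,y} ⊆ {a,b,c,d} and w_{xy} := 1/(det(p_x,p_y,p_z)·det(p_x,p_y,p_u)) with {z,u} = {a,b,c,d}∖{x,y} is the standard self-stress of the four points p_a, p_b, p_c, p_d. -/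

import Mathlib

open scoped RealInnerProductSpace

/-- `det3 a b c` is the determinant of the 3×3 matrix with rows
`(a₁, a₂, 1)`, `(b₁, b₂, 1)`, `(c₁, c₂, 1)`. -/
noncomputable def det3 (a b c : EuclideanSpace ℝ (Fin 2)) : ℝ :=
  Matrix.det !![a 0, a 1, 1; b 0, b 1, 1; c 0, c 1, 1]

/-- The standard self-stress coefficient on the pair `{x, y}` of a quadruple of
points whose remaining two members are `z` and `u`:
`w_{xy} = 1 / (det(p x, p y, p z) · det(p x, p y, p u))`. -/
noncomputable def stdStress {n : ℕ} (p : Fin n → EuclideanSpace ℝ (Fin 2))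
    (x y z u : Fin n) : ℝ :=
  1 / (det3 (p x) (p y) (p z) * det3 (p x) (p y) (p u))

namespace StressAux

noncomputable def rdet (a0 a1 b0 b1 c0 c1 : ℝ) : ℝ :=
  (b0 - a0) * (c1 - a1) - (b1 - a1) * (c0 - a0)

lemma det3_expand (a b c : EuclideanSpace ℝ (Fin 2)) :
    det3 a b c = (b 0 - a 0) * (c 1 - a 1) - (b 1 - a 1) * (c 0 - a 0) := by
  simp [det3, Matrix.det_fin_three, Matrix.vecHead, Matrix.vecTail]; ring

lemma det3_eq (a b c : EuclideanSpace ℝ (Fin 2)) :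
    det3 a b c = rdet (a 0) (a 1) (b 0) (b 1) (c 0) (c 1) := det3_expand a b c

lemma inner2 (x y : EuclideanSpace ℝ (Fin 2)) : ⟪x, y⟫ = x 0 * y 0 + x 1 * y 1 := by
  simp [PiLp.inner_apply, Fin.sum_univ_two]; ring

lemma sub_apply2 (x y : EuclideanSpace ℝ (Fin 2)) (k : Fin 2) : (x - y) k = x k - y k := rfl

lemma eq_of_coords {x y : EuclideanSpace ℝ (Fin 2)} (h0 : x 0 = y 0) (h1 : x 1 = y 1) :
    x = y := by
  ext k
  fin_cases k <;> assumption

lemma collinear_of_det3 (a b c : EuclideanSpace ℝ (Fin 2)) (h : det3 a b c = 0) :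
    Collinear ℝ ({a, b, c} : Set (EuclideanSpace ℝ (Fin 2))) := by
  rw [det3_expand] at h
  rcases eq_or_ne b a with rfl | hba
  · have : ({b, b, c} : Set (EuclideanSpace ℝ (Fin 2))) = {b, c} := by
      simp
    rw [this]; exact collinear_pair ℝ b c
  · rw [collinear_iff_of_mem (Set.mem_insert a _)]
    refine ⟨b - a, ?_⟩
    intro q hq
    have hcomp : b 0 ≠ a 0 ∨ b 1 ≠ a 1 := by
      by_contra hc
      push_neg at hc
      exact hba (eq_of_coords hc.1 hc.2)
    have key : ∃ t : ℝ, c = t • (b - a) +ᵥ a := by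
      rcases hcomp with h0 | h1
      · have h0' : b 0 - a 0 ≠ 0 := sub_ne_zero.mpr h0
        refine ⟨(c 0 - a 0) / (b 0 - a 0), eq_of_coords ?_ ?_⟩ <;>
        · show _ = _ * ((b - a) _) + a _
          rw [sub_apply2]
          field_simp
          try first | linear_combination h | linear_combination -h |
            linear_combination 2*h | linear_combination -2*h | ring
      · have h1' : b 1 - a 1 ≠ 0 := sub_ne_zero.mpr h1
        refine ⟨(c 1 - a 1) / (b 1 - a 1), eq_of_coords ?_ ?_⟩ <;>
        · show _ = _ * ((b - a) _) + a _
          rw [sub_apply2]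
          field_simp
          try first | linear_combination h | linear_combination -h |
            linear_combination 2*h | linear_combination -2*h | ring
    rcases hq with rfl | rfl | rfl
    · exact ⟨0, by simp⟩
    · exact ⟨1, by simp⟩
    · exact key

lemma force_gen (D1 D2 D3 x y z : ℝ) (h1 : D1 ≠ 0) (h2 : D2 ≠ 0) (h3 : D3 ≠ 0)
    (key : D3 * x - D2 * y + D1 * z = 0) :
    (1 / (D1 * D2)) * x + (1 / (-D1 * D3)) * y + (1 / (-D2 * -D3)) * z = 0 := by
  have : (1 / (D1 * D2)) * x + (1 / (-D1 * D3)) * y + (1 / (-D2 * -D3)) * z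
      = (D3 * x - D2 * y + D1 * z) / (D1 * D2 * D3) := by
    field_simp
    ring
  rw [this, key, zero_div]

lemma force0 (a0 a1 b0 b1 c0 c1 d0 d1 : ℝ)
    (h1 : rdet a0 a1 b0 b1 c0 c1 ≠ 0) (h2 : rdet a0 a1 b0 b1 d0 d1 ≠ 0)
    (h3 : rdet a0 a1 c0 c1 d0 d1 ≠ 0) :
    (1 / (rdet a0 a1 b0 b1 c0 c1 * rdet a0 a1 b0 b1 d0 d1)) * (a0 - b0) +
      (1 / (rdet a0 a1 c0 c1 b0 b1 * rdet a0 a1 c0 c1 d0 d1)) * (a0 - c0) +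
      (1 / (rdet a0 a1 d0 d1 b0 b1 * rdet a0 a1 d0 d1 c0 c1)) * (a0 - d0) = 0 := by
  have e1 : rdet a0 a1 c0 c1 b0 b1 = -rdet a0 a1 b0 b1 c0 c1 := by simp only [rdet]; ring
  have e2 : rdet a0 a1 d0 d1 b0 b1 = -rdet a0 a1 b0 b1 d0 d1 := by simp only [rdet]; ring
  have e3 : rdet a0 a1 d0 d1 c0 c1 = -rdet a0 a1 c0 c1 d0 d1 := by simp only [rdet]; ring
  rw [e1, e2, e3]
  exact force_gen _ _ _ _ _ _ h1 h2 h3 (by simp only [rdet]; ring)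

lemma force1 (a0 a1 b0 b1 c0 c1 d0 d1 : ℝ)
    (h1 : rdet a0 a1 b0 b1 c0 c1 ≠ 0) (h2 : rdet a0 a1 b0 b1 d0 d1 ≠ 0)
    (h3 : rdet a0 a1 c0 c1 d0 d1 ≠ 0) :
    (1 / (rdet a0 a1 b0 b1 c0 c1 * rdet a0 a1 b0 b1 d0 d1)) * (a1 - b1) +
      (1 / (rdet a0 a1 c0 c1 b0 b1 * rdet a0 a1 c0 c1 d0 d1)) * (a1 - c1) +
      (1 / (rdet a0 a1 d0 d1 b0 b1 * rdet a0 a1 d0 d1 c0 c1)) * (a1 - d1) = 0 := by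
  have e1 : rdet a0 a1 c0 c1 b0 b1 = -rdet a0 a1 b0 b1 c0 c1 := by simp only [rdet]; ring
  have e2 : rdet a0 a1 d0 d1 b0 b1 = -rdet a0 a1 b0 b1 d0 d1 := by simp only [rdet]; ring
  have e3 : rdet a0 a1 d0 d1 c0 c1 = -rdet a0 a1 c0 c1 d0 d1 := by simp only [rdet]; ring
  rw [e1, e2, e3]
  exact force_gen _ _ _ _ _ _ h1 h2 h3 (by simp only [rdet]; ring)

lemma winv (x0 x1 y0 y1 z0 z1 u0 u1 : ℝ) :
    1 / (rdet y0 y1 x0 x1 z0 z1 * rdet y0 y1 x0 x1 u0 u1) =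
      1 / (rdet x0 x1 y0 y1 z0 z1 * rdet x0 x1 y0 y1 u0 u1) := by
  rw [show rdet y0 y1 x0 x1 z0 z1 = -rdet x0 x1 y0 y1 z0 z1 by simp only [rdet]; ring,
    show rdet y0 y1 x0 x1 u0 u1 = -rdet x0 x1 y0 y1 u0 u1 by simp only [rdet]; ring,
    neg_mul_neg]

lemma rdet_swap12 (a0 a1 b0 b1 c0 c1 : ℝ) :
    rdet b0 b1 a0 a1 c0 c1 = -rdet a0 a1 b0 b1 c0 c1 := by simp only [rdet]; ring

lemma rdet_rot (a0 a1 b0 b1 c0 c1 : ℝ) :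
    rdet c0 c1 a0 a1 b0 b1 = rdet a0 a1 b0 b1 c0 c1 := by simp only [rdet]; ring

lemma equil {wab wac wad wbc wbd wcd a0 a1 b0 b1 c0 c1 d0 d1
    va0 va1 vb0 vb1 vc0 vc1 vd0 vd1 : ℝ}
    (Fa0 : wab * (a0 - b0) + wac * (a0 - c0) + wad * (a0 - d0) = 0)
    (Fa1 : wab * (a1 - b1) + wac * (a1 - c1) + wad * (a1 - d1) = 0)
    (Fb0 : wab * (b0 - a0) + wbc * (b0 - c0) + wbd * (b0 - d0) = 0)
    (Fb1 : wab * (b1 - a1) + wbc * (b1 - c1) + wbd * (b1 - d1) = 0)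
    (Fc0 : wac * (c0 - a0) + wbc * (c0 - b0) + wcd * (c0 - d0) = 0)
    (Fc1 : wac * (c1 - a1) + wbc * (c1 - b1) + wcd * (c1 - d1) = 0)
    (Fd0 : wad * (d0 - a0) + wbd * (d0 - b0) + wcd * (d0 - c0) = 0)
    (Fd1 : wad * (d1 - a1) + wbd * (d1 - b1) + wcd * (d1 - c1) = 0) :
    wab * ((a0 - b0) * (va0 - vb0) + (a1 - b1) * (va1 - vb1)) +
      wac * ((a0 - c0) * (va0 - vc0) + (a1 - c1) * (va1 - vc1)) +
      wad * ((a0 - d0) * (va0 - vd0) + (a1 - d1) * (va1 - vd1)) +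
      wbc * ((b0 - c0) * (vb0 - vc0) + (b1 - c1) * (vb1 - vc1)) +
      wbd * ((b0 - d0) * (vb0 - vd0) + (b1 - d1) * (vb1 - vd1)) +
      wcd * ((c0 - d0) * (vc0 - vd0) + (c1 - d1) * (vc1 - vd1)) = 0 := by
  linear_combination va0 * Fa0 + va1 * Fa1 + vb0 * Fb0 + vb1 * Fb1 + vc0 * Fc0 + vc1 * Fc1 +
    vd0 * Fd0 + vd1 * Fd1

/-- the standard self-stress annihilates every family of strains -/
lemma quad_orth (a b c d va vb vc vd : EuclideanSpace ℝ (Fin 2))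
    (h1 : det3 a b c ≠ 0) (h2 : det3 a b d ≠ 0) (h3 : det3 a c d ≠ 0) (h4 : det3 b c d ≠ 0) :
    1 / (det3 a b c * det3 a b d) * ⟪a - b, va - vb⟫ +
      1 / (det3 a c b * det3 a c d) * ⟪a - c, va - vc⟫ +
      1 / (det3 a d b * det3 a d c) * ⟪a - d, va - vd⟫ +
      1 / (det3 b c a * det3 b c d) * ⟪b - c, vb - vc⟫ +
      1 / (det3 b d a * det3 b d c) * ⟪b - d, vb - vd⟫ +
      1 / (det3 c d a * det3 c d b) * ⟪c - d, vc - vd⟫ = 0 := by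
  rw [det3_eq] at h1 h2 h3 h4
  set A0 := a 0; set A1 := a 1; set B0 := b 0; set B1 := b 1
  set C0 := c 0; set C1 := c 1; set D0 := d 0; set D1 := d 1
  have nba_c : rdet B0 B1 A0 A1 C0 C1 ≠ 0 := by rw [rdet_swap12]; exact neg_ne_zero.mpr h1
  have nba_d : rdet B0 B1 A0 A1 D0 D1 ≠ 0 := by rw [rdet_swap12]; exact neg_ne_zero.mpr h2
  have nca_b : rdet C0 C1 A0 A1 B0 B1 ≠ 0 := by rw [rdet_rot]; exact h1
  have nca_d : rdet C0 C1 A0 A1 D0 D1 ≠ 0 := by rw [rdet_swap12]; exact neg_ne_zero.mpr h3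
  have ncb_d : rdet C0 C1 B0 B1 D0 D1 ≠ 0 := by rw [rdet_swap12]; exact neg_ne_zero.mpr h4
  have nda_b : rdet D0 D1 A0 A1 B0 B1 ≠ 0 := by rw [rdet_rot]; exact h2
  have nda_c : rdet D0 D1 A0 A1 C0 C1 ≠ 0 := by rw [rdet_rot]; exact h3
  have ndb_c : rdet D0 D1 B0 B1 C0 C1 ≠ 0 := by rw [rdet_rot]; exact h4
  have Fa0 := force0 A0 A1 B0 B1 C0 C1 D0 D1 h1 h2 h3
  have Fa1 := force1 A0 A1 B0 B1 C0 C1 D0 D1 h1 h2 h3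
  have Fb0 := force0 B0 B1 A0 A1 C0 C1 D0 D1 nba_c nba_d h4
  have Fb1 := force1 B0 B1 A0 A1 C0 C1 D0 D1 nba_c nba_d h4
  have Fc0 := force0 C0 C1 A0 A1 B0 B1 D0 D1 nca_b nca_d ncb_d
  have Fc1 := force1 C0 C1 A0 A1 B0 B1 D0 D1 nca_b nca_d ncb_d
  have Fd0 := force0 D0 D1 A0 A1 B0 B1 C0 C1 nda_b nda_c ndb_c
  have Fd1 := force1 D0 D1 A0 A1 B0 B1 C0 C1 nda_b nda_c ndb_c
  rw [winv A0 A1 B0 B1 C0 C1 D0 D1] at Fb0 Fb1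
  rw [winv A0 A1 C0 C1 B0 B1 D0 D1, winv B0 B1 C0 C1 A0 A1 D0 D1] at Fc0 Fc1
  rw [winv A0 A1 D0 D1 B0 B1 C0 C1, winv B0 B1 D0 D1 A0 A1 C0 C1,
    winv C0 C1 D0 D1 A0 A1 B0 B1] at Fd0 Fd1
  simp only [det3_eq, inner2, sub_apply2]
  exact equil Fa0 Fa1 Fb0 Fb1 Fc0 Fc1 Fd0 Fd1

lemma solve2 (u w : EuclideanSpace ℝ (Fin 2)) (hd : u 0 * w 1 - u 1 * w 0 ≠ 0) (r s : ℝ) :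
    ∃ x : EuclideanSpace ℝ (Fin 2), ⟪u, x⟫ = r ∧ ⟪w, x⟫ = s := by
  refine ⟨(WithLp.equiv 2 (Fin 2 → ℝ)).symm
    ![(r * w 1 - s * u 1) / (u 0 * w 1 - u 1 * w 0),
      (s * u 0 - r * w 0) / (u 0 * w 1 - u 1 * w 0)], ?_, ?_⟩ <;>
  · rw [inner2]
    simp only [WithLp.equiv_symm_apply, PiLp.toLp_apply, Matrix.cons_val_zero, Matrix.cons_val_one,
      Matrix.head_cons]
    rw [mul_div_assoc', mul_div_assoc', ← add_div, div_eq_iff hd]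
    ring

lemma inner_flip (x y u w : EuclideanSpace ℝ (Fin 2)) :
    ⟪x - y, u - w⟫ = ⟪y - x, w - u⟫ := by
  rw [← neg_sub y x, ← neg_sub w u, inner_neg_neg]

end StressAux
/-- A symmetric assignment `δ` of numbers to pairs of points in
general position is in the image of the rigidity map (i.e. is the family of strains
of some velocity assignment `v`) if and only if for every quadruple of distinct
indices the standard self-stress of the quadruple annihilates `δ`. -/
theorem in_image_rigidity_map_iff_stress_orthogonal
    (n : ℕ)
    (p : Fin n → EuclideanSpace ℝ (Fin 2))
    (hinj : Function.Injective p)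
    (hgp : ∀ i j k : Fin n, i ≠ j → j ≠ k → i ≠ k →
      ¬ Collinear ℝ ({p i, p j, p k} : Set (EuclideanSpace ℝ (Fin 2))))
    (δ : Fin n → Fin n → ℝ) (hsym : ∀ i j : Fin n, δ i j = δ j i) :
    (∃ v : Fin n → EuclideanSpace ℝ (Fin 2),
      ∀ i j : Fin n, i ≠ j → δ i j = ⟪p i - p j, v i - v j⟫) ↔
    (∀ a b c d : Fin n, a ≠ b → a ≠ c → a ≠ d → b ≠ c → b ≠ d → c ≠ d →
      stdStress p a b c d * δ a b + stdStress p a c b d * δ a c +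
        stdStress p a d b c * δ a d + stdStress p b c a d * δ b c +
        stdStress p b d a c * δ b d + stdStress p c d a b * δ c d = 0) := by
  have dne : ∀ i j k : Fin n, i ≠ j → j ≠ k → i ≠ k → det3 (p i) (p j) (p k) ≠ 0 :=
    fun i j k hij hjk hik h => hgp i j k hij hjk hik (StressAux.collinear_of_det3 _ _ _ h)
  constructor
  · rintro ⟨v, hv⟩ a b c d hab hac had hbc hbd hcd
    rw [hv a b hab, hv a c hac, hv a d had, hv b c hbc, hv b d hbd, hv c d hcd]
    simp only [stdStress]
    exact StressAux.quad_orth (p a) (p b) (p c) (p d) (v a) (v b) (v c) (v d)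
      (dne a b c hab hbc hac) (dne a b d hab hbd had)
      (dne a c d hac hcd had) (dne b c d hbc hcd hbd)
  · intro hcond
    rcases lt_or_ge n 2 with hn | hn
    · refine ⟨0, fun i j hij => absurd (Fin.ext (by omega)) hij⟩
    · set i0 : Fin n := ⟨0, by omega⟩ with hi0def
      set i1 : Fin n := ⟨1, by omega⟩ with hi1def
      have hne : i0 ≠ i1 := by
        simp [hi0def, hi1def, Fin.ext_iff]
      set vone : EuclideanSpace ℝ (Fin 2) :=
        (δ i1 i0 / ⟪p i1 - p i0, p i1 - p i0⟫) • (p i1 - p i0) with hvonedef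
      have hu : p i1 - p i0 ≠ 0 :=
        sub_ne_zero.mpr (fun h => hne (hinj h).symm)
      have huu : ⟪p i1 - p i0, p i1 - p i0⟫ ≠ 0 := inner_self_ne_zero.mpr hu
      have hvone : ⟪p i1 - p i0, vone⟫ = δ i1 i0 := by
        rw [hvonedef, real_inner_smul_right, div_mul_cancel₀ _ huu]
      have hsolve : ∀ i : Fin n, i ≠ i0 → i ≠ i1 →
          ∃ x : EuclideanSpace ℝ (Fin 2), ⟪p i - p i0, x⟫ = δ i i0 ∧
            ⟪p i - p i1, x⟫ = δ i i1 + ⟪p i - p i1, vone⟫ := by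
        intro i h0 h1
        apply StressAux.solve2
        have hd := dne i i0 i1 h0 hne h1
        rw [StressAux.det3_expand] at hd
        simp only [StressAux.sub_apply2]
        intro e
        exact hd (by linear_combination e)
      obtain ⟨v, hv0, hv1, hvprop⟩ :
          ∃ v : Fin n → EuclideanSpace ℝ (Fin 2), v i0 = 0 ∧ v i1 = vone ∧
            ∀ i : Fin n, ∀ (h0 : i ≠ i0) (h1 : i ≠ i1),
              ⟪p i - p i0, v i⟫ = δ i i0 ∧
                ⟪p i - p i1, v i⟫ = δ i i1 + ⟪p i - p i1, vone⟫ := by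
        refine ⟨fun i => if h0 : i = i0 then 0 else if h1 : i = i1 then vone
          else Classical.choose (hsolve i h0 h1), ?_, ?_, ?_⟩
        · simp
        · simp [Ne.symm hne]
        · intro i h0 h1
          simp only [dif_neg h0, dif_neg h1]
          exact Classical.choose_spec (hsolve i h0 h1)
      have hstrain : ∀ j : Fin n, j ≠ i0 → j ≠ i1 →
          δ j i0 = ⟪p j - p i0, v j - v i0⟫ ∧ δ j i1 = ⟪p j - p i1, v j - v i1⟫ := by
        intro j h0 h1
        constructor
        · rw [hv0, sub_zero]; exact ((hvprop j h0 h1).1).symm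
        · rw [hv1, inner_sub_right, (hvprop j h0 h1).2]; ring
      have E01 : δ i0 i1 = ⟪p i0 - p i1, v i0 - v i1⟫ := by
        have : ⟪p i0 - p i1, v i0 - v i1⟫ = ⟪p i1 - p i0, vone⟫ := by
          rw [hv0, hv1, zero_sub,
            show p i0 - p i1 = -(p i1 - p i0) from (neg_sub _ _).symm, inner_neg_neg]
        rw [this, hvone]
        exact hsym i0 i1
      refine ⟨v, ?_⟩
      intro i j hij
      rcases eq_or_ne i i0 with rfl | hi0
      · rcases eq_or_ne j i1 with rfl | hj1
        · exact E01
        · rw [hsym, (hstrain j (Ne.symm hij) hj1).1]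
          exact StressAux.inner_flip _ _ _ _
      · rcases eq_or_ne i i1 with rfl | hi1
        · rcases eq_or_ne j i0 with rfl | hj0
          · rw [hsym, E01]
            exact StressAux.inner_flip _ _ _ _
          · rw [hsym, (hstrain j hj0 (Ne.symm hij)).2]
            exact StressAux.inner_flip _ _ _ _
        · rcases eq_or_ne j i0 with rfl | hj0
          · exact (hstrain i hi0 hi1).1
          · rcases eq_or_ne j i1 with rfl | hj1
            · exact (hstrain i hi0 hi1).2
            · have hc := hcond i0 i1 i j hne (Ne.symm hi0) (Ne.symm hj0)
                (Ne.symm hi1) (Ne.symm hj1) hij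
              have hq := StressAux.quad_orth (p i0) (p i1) (p i) (p j)
                (v i0) (v i1) (v i) (v j)
                (dne i0 i1 i hne (Ne.symm hi1) (Ne.symm hi0))
                (dne i0 i1 j hne (Ne.symm hj1) (Ne.symm hj0))
                (dne i0 i j (Ne.symm hi0) hij (Ne.symm hj0))
                (dne i1 i j (Ne.symm hi1) hij (Ne.symm hj1))
              simp only [stdStress] at hc
              have d2 : δ i0 i = ⟪p i0 - p i, v i0 - v i⟫ := by
                rw [hsym, (hstrain i hi0 hi1).1]; exact StressAux.inner_flip _ _ _ _
              have d3 : δ i0 j = ⟪p i0 - p j, v i0 - v j⟫ := by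
                rw [hsym, (hstrain j hj0 hj1).1]; exact StressAux.inner_flip _ _ _ _
              have d4 : δ i1 i = ⟪p i1 - p i, v i1 - v i⟫ := by
                rw [hsym, (hstrain i hi0 hi1).2]; exact StressAux.inner_flip _ _ _ _
              have d5 : δ i1 j = ⟪p i1 - p j, v i1 - v j⟫ := by
                rw [hsym, (hstrain j hj0 hj1).2]; exact StressAux.inner_flip _ _ _ _
              rw [E01, d2, d3, d4, d5] at hc
              have w6 : 1 / (det3 (p i) (p j) (p i0) * det3 (p i) (p j) (p i1)) ≠ 0 :=
                one_div_ne_zero (mul_ne_zero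
                  (dne i j i0 hij hj0 hi0)
                  (dne i j i1 hij hj1 hi1))
              have h6 : 1 / (det3 (p i) (p j) (p i0) * det3 (p i) (p j) (p i1)) * δ i j =
                  1 / (det3 (p i) (p j) (p i0) * det3 (p i) (p j) (p i1)) *
                    ⟪p i - p j, v i - v j⟫ := by
                linarith [hc, hq]
              exact mul_left_cancel₀ w6 h6
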